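/- arXiv:2508.10167 — 2 statements merged into one kernel-verified Lean document; each statement's English description precedes it below -/
import Mathlib

section
/- Let N = 2^n, and for 1 ≤ j < n let C_j = {k : 1 ≤ k < N, k ≡ 2^{j-1} (mod 2^j)} and M_k = ∑_{i=0}^{N-1-k}(|i⟩⟨i+k| + |i+k⟩⟨i|). Then ∑_{k ∈ C_j} M_k = (I + X)^{⊗(n-j)} ⊗ X ⊗ I^{⊗(j-1)}. -/
open Matrix Finset

noncomputable section

instance instNeZeroPow2 (n : ℕ) : NeZero (2 ^ n) := ⟨pow_ne_zero n two_ne_zero⟩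

/-- Pauli X matrix. -/
def pX : Matrix (Fin 2) (Fin 2) ℂ := !![0, 1; 1, 0]

/-- Pauli Z matrix. -/
def pZ : Matrix (Fin 2) (Fin 2) ℂ := !![1, 0; 0, -1]

/-- Hadamard matrix. -/
def pH : Matrix (Fin 2) (Fin 2) ℂ := (Real.sqrt 2 : ℂ)⁻¹ • !![1, 1; 1, -1]

/-- |0⟩⟨0| -/
def ket0bra0 : Matrix (Fin 2) (Fin 2) ℂ := !![1, 0; 0, 0]

/-- the `q`-th bit of `k`, as an index into `Fin 2`. -/
def bit (k q : ℕ) : Fin 2 := if Nat.testBit k q then 1 else 0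

/-- Big-endian Kronecker product of `n` 2×2 matrices, where the factor `A q`
acts on the bit at position `q` (position 0 = least significant bit; the factor
for the most significant bit comes first in the tensor product). -/
def bigT (n : ℕ) (A : ℕ → Matrix (Fin 2) (Fin 2) ℂ) :
    Matrix (Fin (2 ^ n)) (Fin (2 ^ n)) ℂ :=
  fun i j => ∏ q ∈ Finset.range n, A q (bit i.val q) (bit j.val q)

/-- The matrix unit |i⟩⟨j|. -/
def ketbra {N : ℕ} (i j : Fin N) : Matrix (Fin N) (Fin N) ℂ :=
  Matrix.single i j 1

open Fin.NatCast in
/-- M_k = a ∑_{i=0}^{N-1-k} (|i⟩⟨i+k| + |i+k⟩⟨i|). -/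
def Mk (N : ℕ) [NeZero N] (k : ℕ) (a : ℂ) : Matrix (Fin N) (Fin N) ℂ :=
  a • ∑ i ∈ Finset.range (N - k),
      (ketbra (i : Fin N) ((i + k : ℕ) : Fin N) + ketbra ((i + k : ℕ) : Fin N) (i : Fin N))

/-- Cyclic decrement permutation matrix: `P |i⟩ = |(i-1) mod N⟩`. -/
def cycP (N : ℕ) : Matrix (Fin N) (Fin N) ℂ :=
  fun r c => if (r.val + 1) % N = c.val then 1 else 0

/-- `E_k`: the matrix `T` with its bottom-right `2k × 2k` block set to zero
(for `T` an `2^n × 2^n` matrix). -/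
def Ek (n k : ℕ) (T : Matrix (Fin (2 ^ n)) (Fin (2 ^ n)) ℂ) :
    Matrix (Fin (2 ^ n)) (Fin (2 ^ n)) ℂ :=
  fun i j => if 2 ^ n - 2 * k ≤ i.val ∧ 2 ^ n - 2 * k ≤ j.val then 0 else T i j

/-- The congruence class C_j = {k : 1 ≤ k < 2^n, k ≡ 2^(j-1) (mod 2^j)}. -/
def Cj (n j : ℕ) : Finset ℕ :=
  (Finset.range (2 ^ n)).filter fun k => 1 ≤ k ∧ k % 2 ^ j = 2 ^ (j - 1)

/-- Rotation `R_x(φ) = cos(φ/2)·I − i sin(φ/2)·X`. -/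
def Rx (φ : ℝ) : Matrix (Fin 2) (Fin 2) ℂ :=
  (Real.cos (φ / 2) : ℂ) • 1 - (Complex.I * (Real.sin (φ / 2) : ℂ)) • pX

/-! ### Auxiliary lemmas -/

open Fin.NatCast in
lemma aux_sum_ind (N : ℕ) [NeZero N] (k : ℕ) (r c : Fin N) :
    (∑ i ∈ Finset.range (N - k), if ((i : Fin N) = r ∧ ((i + k : ℕ) : Fin N) = c) then (1:ℂ) else 0)
      = if r.val + k = c.val then 1 else 0 := by
  by_cases h : r.val + k = c.val
  · rw [Finset.sum_eq_single r.val]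
    · have h1 : ((r.val : ℕ) : Fin N) = r := by
        apply Fin.ext
        rw [Fin.val_cast_of_lt r.isLt]
      have h2 : ((r.val + k : ℕ) : Fin N) = c := by
        apply Fin.ext
        rw [Fin.val_cast_of_lt (h ▸ c.isLt), h]
      rw [if_pos ⟨h1, h2⟩, if_pos h]
    · intro i hi hne
      rw [Finset.mem_range] at hi
      rw [if_neg]
      rintro ⟨h1, _⟩
      apply hne
      have hiN : i < N := by omega
      have h1' := congrArg Fin.val h1
      rwa [Fin.val_cast_of_lt hiN] at h1'
    · intro hmem
      exfalso
      apply hmem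
      rw [Finset.mem_range]
      have := c.isLt
      omega
  · rw [if_neg h]
    apply Finset.sum_eq_zero
    intro i hi
    rw [Finset.mem_range] at hi
    rw [if_neg]
    rintro ⟨h1, h2⟩
    apply h
    have hiN : i < N := by omega
    have hikN : i + k < N := by omega
    have e1 : i = r.val := by
      have := congrArg Fin.val h1; rwa [Fin.val_cast_of_lt hiN] at this
    have e2 : i + k = c.val := by
      have := congrArg Fin.val h2; rwa [Fin.val_cast_of_lt hikN] at this
    omega

open Fin.NatCast in
lemma aux_Mk_apply (N : ℕ) [NeZero N] (k : ℕ) (r c : Fin N) :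
    Mk N k 1 r c = (if r.val + k = c.val then (1:ℂ) else 0)
      + (if c.val + k = r.val then 1 else 0) := by
  unfold Mk ketbra
  rw [Matrix.smul_apply, one_smul, Matrix.sum_apply]
  simp only [Matrix.add_apply, Matrix.single, Matrix.of_apply]
  rw [Finset.sum_add_distrib, aux_sum_ind]
  congr 1
  have : (∑ x ∈ Finset.range (N - k), if (((x + k : ℕ) : Fin N) = r ∧ (x : Fin N) = c) then (1:ℂ) else 0)
      = ∑ x ∈ Finset.range (N - k), if ((x : Fin N) = c ∧ ((x + k : ℕ) : Fin N) = r) then (1:ℂ) else 0 := by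
    apply Finset.sum_congr rfl
    intro x _
    rw [if_congr and_comm rfl rfl]
  rw [this, aux_sum_ind]

lemma aux_one_entry (a b : ℕ) (q : ℕ) :
    (1 : Matrix (Fin 2) (Fin 2) ℂ) (bit a q) (bit b q)
      = if Nat.testBit a q = Nat.testBit b q then 1 else 0 := by
  by_cases h1 : Nat.testBit a q <;> by_cases h2 : Nat.testBit b q <;>
    simp [bit, h1, h2, Matrix.one_apply]

lemma aux_pX_entry (a b : ℕ) (q : ℕ) :
    pX (bit a q) (bit b q)
      = if Nat.testBit a q = Nat.testBit b q then 0 else 1 := by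
  by_cases h1 : Nat.testBit a q <;> by_cases h2 : Nat.testBit b q <;>
    simp [bit, h1, h2, pX]

lemma aux_onepX_entry (a b : ℕ) (q : ℕ) :
    (1 + pX) (bit a q) (bit b q) = 1 := by
  rw [Matrix.add_apply, aux_one_entry, aux_pX_entry]
  by_cases h : Nat.testBit a q = Nat.testBit b q <;> simp [h]

lemma aux_bigT_apply (n j : ℕ) (hj : 1 ≤ j) (hjn : j < n) (r c : Fin (2^n)) :
    bigT n (fun q => if q < j - 1 then 1 else if q = j - 1 then pX else 1 + pX) r c
      = if ((∀ q < j - 1, Nat.testBit r.val q = Nat.testBit c.val q) ∧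
            Nat.testBit r.val (j-1) ≠ Nat.testBit c.val (j-1)) then 1 else 0 := by
  unfold bigT
  have step : ∀ q ∈ Finset.range n,
      (if q < j - 1 then (1 : Matrix (Fin 2) (Fin 2) ℂ) else if q = j - 1 then pX else 1 + pX)
        (bit r.val q) (bit c.val q)
      = if (if q < j - 1 then Nat.testBit r.val q = Nat.testBit c.val q
            else if q = j - 1 then ¬ (Nat.testBit r.val q = Nat.testBit c.val q) else True)
        then 1 else 0 := by
    intro q _
    by_cases h1 : q < j - 1
    · simp only [if_pos h1]; exact aux_one_entry _ _ _
    · simp only [if_neg h1]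
      by_cases h2 : q = j - 1
      · simp only [if_pos h2]
        rw [aux_pX_entry]
        by_cases h : Nat.testBit r.val q = Nat.testBit c.val q <;> simp [h]
      · simp only [if_neg h2]
        rw [aux_onepX_entry, if_pos trivial]
  rw [Finset.prod_congr rfl step, Finset.prod_boole]
  congr 1
  simp only [eq_iff_iff]
  constructor
  · intro H
    constructor
    · intro q hq
      have hqn : q ∈ Finset.range n := Finset.mem_range.mpr (by omega)
      have := H q hqn
      simpa only [if_pos hq] using this
    · have hqn : j - 1 ∈ Finset.range n := Finset.mem_range.mpr (by omega)
      have := H (j-1) hqn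
      simp only [if_neg (show ¬ (j-1 < j-1) by omega), if_pos rfl] at this
      exact this
  · rintro ⟨H1, H2⟩ q _
    by_cases h1 : q < j - 1
    · simp only [if_pos h1]; exact H1 q h1
    · simp only [if_neg h1]
      by_cases h2 : q = j - 1
      · simp only [if_pos h2, h2]; exact H2
      · simp only [if_neg h2]

lemma aux_mem_Cj {n j k : ℕ} : k ∈ Cj n j ↔ k < 2^n ∧ 1 ≤ k ∧ k % 2^j = 2^(j-1) := by
  simp [Cj, and_assoc]

lemma aux_low_bits (m a b : ℕ) :
    (∀ q < m, Nat.testBit a q = Nat.testBit b q) ↔ a % 2^m = b % 2^m := by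
  constructor
  · intro H
    apply Nat.eq_of_testBit_eq
    intro i
    rw [Nat.testBit_mod_two_pow, Nat.testBit_mod_two_pow]
    by_cases h : i < m
    · simp [h, H i h]
    · simp [h]
  · intro H q hq
    have := congrArg (fun x => Nat.testBit x q) H
    simpa [Nat.testBit_mod_two_pow, hq] using this

lemma aux_high_bit (m a b : ℕ) :
    (Nat.testBit a m ≠ Nat.testBit b m) ↔ a / 2^m % 2 ≠ b / 2^m % 2 := by
  rw [Nat.testBit_eq_decide_div_mod_eq, Nat.testBit_eq_decide_div_mod_eq]
  rcases Nat.mod_two_eq_zero_or_one (a / 2^m) with h1 | h1 <;>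
    rcases Nat.mod_two_eq_zero_or_one (b / 2^m) with h2 | h2 <;> simp [h1, h2]

lemma aux_mod_bits (j : ℕ) (hj : 1 ≤ j) (a b : ℕ) (hab : a < b) :
    (b - a) % 2^j = 2^(j-1) ↔
      (a % 2^(j-1) = b % 2^(j-1) ∧ a / 2^(j-1) % 2 ≠ b / 2^(j-1) % 2) := by
  set P := 2^(j-1) with hPdef
  have hP : 0 < P := Nat.pow_pos (by norm_num)
  have h2j : 2^j = P * 2 := by
    rw [hPdef, ← pow_succ]
    congr 1
    omega
  rw [h2j]
  set d := b - a with hd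
  have hb : b = a + d := by omega
  have step1 : d % (P*2) = P ↔ (a + d) % (P*2) = (a + P) % (P*2) := by
    have hPM : P % (P*2) = P := Nat.mod_eq_of_lt (by omega)
    constructor
    · intro h
      have : d ≡ P [MOD P*2] := by unfold Nat.ModEq; rw [h, hPM]
      exact (Nat.ModEq.add_left a this)
    · intro h
      have : d ≡ P [MOD P*2] := Nat.ModEq.add_left_cancel' a h
      unfold Nat.ModEq at this
      rw [hPM] at this
      exact this
  rw [step1, ← hb]
  rw [Nat.mod_mul, Nat.mod_mul, Nat.add_mod_right, Nat.add_div_right _ hP]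
  set x := a % P with hx
  set y := b % P with hy
  set u := a / P
  set v := b / P
  have hxP : x < P := Nat.mod_lt _ hP
  have hyP : y < P := Nat.mod_lt _ hP
  have hu1 : (u + 1) % 2 = (u % 2 + 1) % 2 := by omega
  rw [hu1]
  rcases Nat.mod_two_eq_zero_or_one u with h1 | h1 <;>
    rcases Nat.mod_two_eq_zero_or_one v with h2 | h2 <;> simp [h1, h2] <;> omega

lemma aux_keyCj (n j : ℕ) (hj : 1 ≤ j) (a b : ℕ) (hb : b < 2^n) (hab : a < b) :
    (b - a ∈ Cj n j ↔
      ((∀ q < j - 1, Nat.testBit a q = Nat.testBit b q) ∧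
        Nat.testBit a (j-1) ≠ Nat.testBit b (j-1))) := by
  rw [aux_mem_Cj, aux_low_bits, aux_high_bit, ← aux_mod_bits j hj a b hab]
  have h1 : b - a < 2^n := by omega
  have h2 : 1 ≤ b - a := by omega
  simp [h1, h2]

lemma aux_sum_Cj_ind (n j : ℕ) (r c : ℕ) :
    (∑ k ∈ Cj n j, if r + k = c then (1:ℂ) else 0)
      = if c - r ∈ Cj n j ∧ r < c then 1 else 0 := by
  have step : ∀ k ∈ Cj n j,
      (if r + k = c then (1:ℂ) else 0) = if k = c - r then (if r < c then (1:ℂ) else 0) else 0 := by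
    intro k hk
    have hk1 : 1 ≤ k := (aux_mem_Cj.mp hk).2.1
    by_cases h : r + k = c
    · rw [if_pos h, if_pos (by omega), if_pos (by omega)]
    · rw [if_neg h]
      by_cases h2 : k = c - r
      · by_cases h3 : r < c
        · omega
        · rw [if_pos h2, if_neg h3]
      · rw [if_neg h2]
  rw [Finset.sum_congr rfl step, Finset.sum_ite_eq' (Cj n j) (c - r)]
  by_cases h : c - r ∈ Cj n j
  · rw [if_pos h]
    by_cases h2 : r < c <;> simp [h, h2]
  · simp [h]

theorem stmt5 (n j : ℕ) (hn : 2 ≤ n) (hj : 1 ≤ j) (hjn : j < n) :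
    ∑ k ∈ Cj n j, Mk (2 ^ n) k 1 =
      bigT n (fun q => if q < j - 1 then 1 else if q = j - 1 then pX else 1 + pX) := by
  ext r c
  rw [Matrix.sum_apply, aux_bigT_apply n j hj hjn r c,
    Finset.sum_congr rfl (fun k _ => aux_Mk_apply (2^n) k r c),
    Finset.sum_add_distrib, aux_sum_Cj_ind, aux_sum_Cj_ind]
  rcases lt_trichotomy r.val c.val with h | h | h
  · have h2 : ¬((r.val - c.val) ∈ Cj n j ∧ c.val < r.val) := by
      rintro ⟨_, hh⟩; omega
    rw [if_neg h2, add_zero]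
    exact if_congr (Iff.trans (and_iff_left h) (aux_keyCj n j hj r.val c.val c.isLt h)) rfl rfl
  · have h1 : ¬((c.val - r.val) ∈ Cj n j ∧ r.val < c.val) := by rintro ⟨_, hh⟩; omega
    have h2 : ¬((r.val - c.val) ∈ Cj n j ∧ c.val < r.val) := by rintro ⟨_, hh⟩; omega
    have h3 : ¬((∀ q < j - 1, Nat.testBit r.val q = Nat.testBit c.val q) ∧
        Nat.testBit r.val (j-1) ≠ Nat.testBit c.val (j-1)) := by
      rintro ⟨_, hh⟩; exact hh (by rw [h])
    rw [if_neg h1, if_neg h2, if_neg h3, add_zero]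
  · have h1 : ¬((c.val - r.val) ∈ Cj n j ∧ r.val < c.val) := by rintro ⟨_, hh⟩; omega
    rw [if_neg h1, zero_add]
    have key := aux_keyCj n j hj c.val r.val r.isLt h
    have symm : ((∀ q < j - 1, Nat.testBit c.val q = Nat.testBit r.val q) ∧
          Nat.testBit c.val (j-1) ≠ Nat.testBit r.val (j-1)) ↔
        ((∀ q < j - 1, Nat.testBit r.val q = Nat.testBit c.val q) ∧
          Nat.testBit r.val (j-1) ≠ Nat.testBit c.val (j-1)) := by
      constructor <;> rintro ⟨a1, a2⟩ <;>
        exact ⟨fun q hq => (a1 q hq).symm, fun e => a2 e.symm⟩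
    exact if_congr (Iff.trans (and_iff_left h) (Iff.trans key symm)) rfl rfl
end
end

section
/- For k = 2^m with m < n-1 and N = 2^n, the matrices T_k = I^{⊗(n-m-1)} ⊗ X ⊗ I^{⊗m} and P^k E_k P^{-k} do not commute, where P is the cyclic decrement on N elements and E_k is T_k with its bottom-right 2k×2k block zeroed. -/
open Matrix Finset

noncomputable section

lemma xor32 (m : ℕ) : 2 * 2 ^ m ^^^ 2 ^ m = 3 * 2 ^ m := by
  apply Nat.eq_of_testBit_eq
  intro q
  have h2 : 2 * 2 ^ m = 2 ^ (m + 1) := by ring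
  rw [Nat.testBit_xor, h2, Nat.testBit_two_pow, Nat.testBit_two_pow,
      show 3 * 2 ^ m = 2 ^ m * 3 by ring, Nat.testBit_two_pow_mul]
  rcases lt_trichotomy q m with h | h | h
  · simp [Nat.not_le_of_lt h]
    omega
  · subst h; simp
  · by_cases hq : q = m + 1
    · subst hq
      simp [(by omega : m ≤ m + 1), (by omega : m + 1 - m = 1), (by omega : ¬ m = m + 1)]
      decide
    · have h3 : Nat.testBit 3 (q - m) = false :=
        Nat.testBit_lt_two_pow (by
          have : 2 ≤ q - m := by omega
          calc 3 < 2 ^ 2 := by norm_num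
            _ ≤ 2 ^ (q - m) := Nat.pow_le_pow_right (by norm_num) this)
      simp [Nat.le_of_lt h, h3]
      omega

lemma pX_apply (a b : Fin 2) : pX a b = if a = b then 0 else 1 := by
  fin_cases a <;> fin_cases b <;> simp [pX]

lemma Tval {n : ℕ} (m : ℕ) (hm : m < n) (i j : Fin (2 ^ n)) :
    bigT n (fun q => if q = m then pX else 1) i j
      = if (j : ℕ) = (i : ℕ) ^^^ 2 ^ m then 1 else 0 := by
  unfold bigT
  split_ifs with h
  · apply Finset.prod_eq_one
    intro q _
    by_cases hqm : q = m
    · subst hqm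
      have hb : Nat.testBit j.val q = ! Nat.testBit i.val q := by
        rw [h, Nat.testBit_xor, Nat.testBit_two_pow_self, Bool.xor_true]
      simp only [if_pos rfl, bit, hb]
      rcases Bool.eq_false_or_eq_true (Nat.testBit i.val q) with hc | hc <;>
        simp [hc, pX_apply]
    · have hb : Nat.testBit j.val q = Nat.testBit i.val q := by
        rw [h, Nat.testBit_xor, Nat.testBit_two_pow_of_ne (fun hh => hqm hh.symm)]
        simp
      simp [hqm, bit, hb, Matrix.one_apply]
  · obtain ⟨q, hq⟩ := Nat.exists_testBit_ne_of_ne h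
    have hqn : q < n := by
      by_contra hqn
      push_neg at hqn
      have h1 : Nat.testBit j.val q = false :=
        Nat.testBit_lt_two_pow (lt_of_lt_of_le j.isLt (Nat.pow_le_pow_right (by norm_num) hqn))
      have h2 : ((i : ℕ) ^^^ 2 ^ m).testBit q = false := by
        rw [Nat.testBit_xor,
          Nat.testBit_lt_two_pow (lt_of_lt_of_le i.isLt (Nat.pow_le_pow_right (by norm_num) hqn)),
          Nat.testBit_two_pow_of_ne (by omega)]
        rfl
      exact hq (h1.trans h2.symm)
    apply Finset.prod_eq_zero (Finset.mem_range.mpr hqn)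
    by_cases hqm : q = m
    · subst hqm
      have hb : Nat.testBit j.val q = Nat.testBit i.val q := by
        have := hq
        rw [Nat.testBit_xor, Nat.testBit_two_pow_self, Bool.xor_true] at this
        rcases Bool.eq_false_or_eq_true (Nat.testBit i.val q) with hc | hc <;>
          rcases Bool.eq_false_or_eq_true (Nat.testBit j.val q) with hd | hd <;>
          simp_all
      simp only [if_pos rfl, bit, hb]
      rcases Bool.eq_false_or_eq_true (Nat.testBit i.val q) with hc | hc <;>
        simp [hc, pX_apply]
    · have hb : Nat.testBit j.val q ≠ Nat.testBit i.val q := by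
        rw [Nat.testBit_xor, Nat.testBit_two_pow_of_ne (fun hh => hqm hh.symm)] at hq
        simpa using hq
      have hbb : bit j.val q ≠ bit i.val q := by
        unfold bit
        rcases Bool.eq_false_or_eq_true (Nat.testBit i.val q) with hc | hc <;>
          rcases Bool.eq_false_or_eq_true (Nat.testBit j.val q) with hd | hd <;>
          simp_all
      simp [hqm, Matrix.one_apply, hbb.symm]

lemma cycP_pow_apply (N : ℕ) [NeZero N] (k : ℕ) (i j : Fin N) :
    ((cycP N) ^ k) i j = if ((i : ℕ) + k) % N = (j : ℕ) then 1 else 0 := by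
  have hN : 0 < N := Nat.pos_of_ne_zero (NeZero.ne N)
  induction k generalizing j with
  | zero =>
    rw [pow_zero, Matrix.one_apply, Nat.add_zero, Nat.mod_eq_of_lt i.isLt]
    simp [Fin.ext_iff]
  | succ k ih =>
    rw [pow_succ, Matrix.mul_apply]
    rw [Finset.sum_eq_single (⟨((i : ℕ) + k) % N, Nat.mod_lt _ hN⟩ : Fin N)]
    · rw [ih]
      have hmm : (((i : ℕ) + k) % N + 1) % N = ((i : ℕ) + (k + 1)) % N := by
        rw [Nat.mod_add_mod, ← Nat.add_assoc]
      simp [cycP, hmm]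
    · intro b _ hb
      rw [ih, if_neg, zero_mul]
      intro hc
      exact hb (Fin.ext hc.symm)
    · intro hc; exact absurd (Finset.mem_univ _) hc
lemma conj_apply (N : ℕ) [NeZero N] (k : ℕ) (M : Matrix (Fin N) (Fin N) ℂ) (i j : Fin N) :
    ((cycP N) ^ k * M * ((cycP N)ᵀ) ^ k) i j
      = M ⟨((i : ℕ) + k) % N, Nat.mod_lt _ (Nat.pos_of_ne_zero (NeZero.ne N))⟩
          ⟨((j : ℕ) + k) % N, Nat.mod_lt _ (Nat.pos_of_ne_zero (NeZero.ne N))⟩ := by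
  have hN : 0 < N := Nat.pos_of_ne_zero (NeZero.ne N)
  rw [← Matrix.transpose_pow, Matrix.mul_apply]
  rw [Finset.sum_eq_single (⟨((j : ℕ) + k) % N, Nat.mod_lt _ hN⟩ : Fin N)]
  · rw [Matrix.transpose_apply, cycP_pow_apply, if_pos rfl, mul_one, Matrix.mul_apply]
    rw [Finset.sum_eq_single (⟨((i : ℕ) + k) % N, Nat.mod_lt _ hN⟩ : Fin N)]
    · rw [cycP_pow_apply, if_pos rfl, one_mul]
    · intro b _ hb
      rw [cycP_pow_apply, if_neg, zero_mul]
      intro hc; exact hb (Fin.ext hc.symm)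
    · intro hc; exact absurd (Finset.mem_univ _) hc
  · intro b _ hb
    rw [Matrix.transpose_apply, cycP_pow_apply, if_neg, mul_zero]
    intro hc; exact hb (Fin.ext hc.symm)
  · intro hc; exact absurd (Finset.mem_univ _) hc

theorem stmt15 (n m : ℕ) (hn : 2 ≤ n) (hm : m < n - 1) :
    ¬ Commute (bigT n fun q => if q = m then pX else 1)
        ((cycP (2 ^ n)) ^ (2 ^ m) *
          Ek n (2 ^ m) (bigT n fun q => if q = m then pX else 1) *
          ((cycP (2 ^ n))ᵀ) ^ (2 ^ m)) := by
  intro hcomm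
  have hmn : m < n := by omega
  set N := 2 ^ n with hN
  set k := 2 ^ m with hk
  set T := (bigT n fun q => if q = m then pX else 1) with hT
  set F := ((cycP N) ^ k * Ek n k T * ((cycP N)ᵀ) ^ k) with hF
  have hkpos : 0 < k := Nat.pow_pos (by norm_num)
  have hk4 : 4 * k ≤ N := by
    have h4 : 4 * k = 2 ^ (m + 2) := by rw [hk]; ring
    rw [h4, hN]; exact Nat.pow_le_pow_right (by norm_num) (by omega)
  have hkN : k < N := by omega
  have h2k : 2 * k < N := by omega
  have h3k : 3 * k < N := by omega
  have hNpos : 0 < N := by omega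
  have heq := congrFun (congrFun hcomm.eq (0 : Fin N)) ⟨2 * k, h2k⟩
  have hx32 : 2 * k ^^^ k = 3 * k := by rw [hk]; exact xor32 m
  -- values of T at specific entries
  have hT0k : T 0 ⟨k, hkN⟩ = 1 := by
    rw [hT, Tval m hmn,
      if_pos (show ((⟨k, hkN⟩ : Fin N) : ℕ) = ((0 : Fin N) : ℕ) ^^^ 2 ^ m by simp [hk])]
  have hT23 : T ⟨2 * k, h2k⟩ ⟨3 * k, h3k⟩ = 1 := by
    rw [hT, Tval m hmn, if_pos]
    show 3 * k = 2 * k ^^^ 2 ^ m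
    rw [← hk]; exact hx32.symm
  have hT32 : T ⟨3 * k, h3k⟩ ⟨2 * k, h2k⟩ = 1 := by
    rw [hT, Tval m hmn, if_pos]
    show 2 * k = 3 * k ^^^ 2 ^ m
    rw [← hk, ← hx32, xor_cancel_right]
  -- LHS
  have hLHS : (T * F) (0 : Fin N) ⟨2 * k, h2k⟩
      = if N - 2 * k ≤ 2 * k ∧ N - 2 * k ≤ 3 * k then 0 else 1 := by
    rw [Matrix.mul_apply, Finset.sum_eq_single (⟨k, hkN⟩ : Fin N)]
    · rw [hT0k, one_mul, hF, conj_apply]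
      have e1 : (⟨(((⟨k, hkN⟩ : Fin N) : ℕ) + k) % N,
          Nat.mod_lt _ (Nat.pos_of_ne_zero (NeZero.ne N))⟩ : Fin N) = ⟨2 * k, h2k⟩ := by
        apply Fin.ext
        show (k + k) % N = 2 * k
        rw [Nat.mod_eq_of_lt (by omega)]; omega
      have e2 : (⟨(((⟨2 * k, h2k⟩ : Fin N) : ℕ) + k) % N,
          Nat.mod_lt _ (Nat.pos_of_ne_zero (NeZero.ne N))⟩ : Fin N) = ⟨3 * k, h3k⟩ := by
        apply Fin.ext
        show (2 * k + k) % N = 3 * k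
        rw [Nat.mod_eq_of_lt (by omega)]; omega
      rw [e1, e2]
      unfold Ek
      rw [hT23]
    · intro b _ hb
      rw [hT, Tval m hmn, if_neg, zero_mul]
      intro hc
      exact hb (Fin.ext (by simpa [hk] using hc))
    · intro hc; exact absurd (Finset.mem_univ _) hc
  -- RHS
  have hRHS : (F * T) (0 : Fin N) ⟨2 * k, h2k⟩
      = Ek n k T ⟨k, hkN⟩
          ⟨(3 * k + k) % N, Nat.mod_lt _ (Nat.pos_of_ne_zero (NeZero.ne N))⟩ := by
    rw [Matrix.mul_apply, Finset.sum_eq_single (⟨3 * k, h3k⟩ : Fin N)]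
    · rw [hT32, mul_one, hF, conj_apply]
      have e1 : (⟨(((0 : Fin N) : ℕ) + k) % N,
          Nat.mod_lt _ (Nat.pos_of_ne_zero (NeZero.ne N))⟩ : Fin N) = ⟨k, hkN⟩ := by
        apply Fin.ext
        show (((0 : Fin N) : ℕ) + k) % N = k
        rw [Fin.val_zero, Nat.zero_add, Nat.mod_eq_of_lt hkN]
      rw [e1]
    · intro b _ hb
      rw [hT, Tval m hmn, if_neg, mul_zero]
      intro hc
      apply hb
      apply Fin.ext
      show (b : ℕ) = 3 * k
      rw [← hk] at hc
      calc (b : ℕ) = (b : ℕ) ^^^ k ^^^ k := (xor_cancel_right _ _).symm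
        _ = 2 * k ^^^ k := by rw [← hc]
        _ = 3 * k := hx32
    · intro hc; exact absurd (Finset.mem_univ _) hc
  rw [hLHS, hRHS] at heq
  rcases eq_or_lt_of_le hk4 with hcase | hcase
  · -- N = 4k
    have e4 : (⟨(3 * k + k) % N, Nat.mod_lt _ (Nat.pos_of_ne_zero (NeZero.ne N))⟩ : Fin N)
        = ⟨0, hNpos⟩ := by
      apply Fin.ext
      show (3 * k + k) % N = 0
      rw [show 3 * k + k = N by omega, Nat.mod_self]
    have hEk0 : Ek n k T ⟨k, hkN⟩ ⟨0, hNpos⟩ = T ⟨k, hkN⟩ ⟨0, hNpos⟩ := by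
      unfold Ek
      rw [if_neg]
      show ¬ (N - 2 * k ≤ k ∧ N - 2 * k ≤ 0)
      omega
    have hTk0 : T ⟨k, hkN⟩ ⟨0, hNpos⟩ = 1 := by
      rw [hT, Tval m hmn, if_pos]
      show (0 : ℕ) = k ^^^ 2 ^ m
      rw [← hk, Nat.xor_self]
    rw [e4, hEk0, hTk0, if_pos (show N - 2 * k ≤ 2 * k ∧ N - 2 * k ≤ 3 * k by omega)] at heq
    exact zero_ne_one heq
  · -- 4k < N
    have e4 : (⟨(3 * k + k) % N, Nat.mod_lt _ (Nat.pos_of_ne_zero (NeZero.ne N))⟩ : Fin N)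
        = ⟨4 * k, hcase⟩ := by
      apply Fin.ext
      show (3 * k + k) % N = 4 * k
      rw [Nat.mod_eq_of_lt (by omega)]; omega
    have hT4 : T ⟨k, hkN⟩ ⟨4 * k, hcase⟩ = 0 := by
      rw [hT, Tval m hmn, if_neg]
      show ¬ (4 * k = k ^^^ 2 ^ m)
      rw [← hk, Nat.xor_self]; omega
    have hEk4 : Ek n k T ⟨k, hkN⟩ ⟨4 * k, hcase⟩ = 0 := by
      unfold Ek
      rw [hT4]
      split_ifs <;> rfl
    rw [e4, hEk4, if_neg (show ¬ (N - 2 * k ≤ 2 * k ∧ N - 2 * k ≤ 3 * k) by omega)] at heq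
    exact one_ne_zero heq
end
end
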